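/- arXiv:1707.08758 — 3 statements merged into one kernel-verified Lean document; each statement's English description precedes it below -/
import Mathlib

section
/- If conditions (C1) and (C2) hold, then ~⁺_j is symmetric: if (w,σ) ~⁺_j (w',σ') then (w',σ') ~⁺_j (w,σ). -/
def updateRel {W E : Type*} (r : W → W → Prop) (s : W → E → E → Prop) :
    W × E → W × E → Prop :=
  fun p q => r p.1 q.1 ∧ s p.1 p.2 q.2

theorem updateRel_symm {W E : Type*} {r : W → W → Prop} {s : W → E → E → Prop}
    (hr : Std.Symm r) (hs : ∀ w, Std.Symm (s w)) (hconst : ∀ w w', r w w' → s w = s w') :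
    Std.Symm (updateRel r s) where
  symm := by
    rintro ⟨w, σ⟩ ⟨w', σ'⟩ ⟨hww', hσσ'⟩
    exact ⟨hr.symm w w' hww', hconst w w' hww' ▸ (hs w).symm σ σ' hσσ'⟩

/-- Under (C1) and (C2), ~⁺_j is symmetric. -/
theorem updated_relation_symmetric
    {W A E : Type*}
    (sim : A → W → W → Prop)
    (f : A → W → E → E → Prop)
    (pre : E → W → Prop)
    (hsim : ∀ j, Equivalence (sim j))
    (hC1 : ∀ j w w', sim j w w' → f j w = f j w')
    (hC2 : ∀ j w, Equivalence (f j w))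
    (j : A) :
    ∀ x y : {p : W × E // pre p.2 p.1},
      (sim j x.1.1 y.1.1 ∧ f j x.1.1 x.1.2 y.1.2) →
      (sim j y.1.1 x.1.1 ∧ f j y.1.1 y.1.2 x.1.2) :=
  fun x y =>
    (updateRel_symm (hsim j).stdSymm (fun w => (hC2 j w).stdSymm) (hC1 j)).symm x.1 y.1
end

section
/- In the canonical model, condition (C1) holds: if Γ ~^c_j Δ (i.e., {K_j φ : K_j φ ∈ Γ} = {K_j φ : K_j φ ∈ Δ}) then f^c_j(Γ) = f^c_j(Δ), where f^c_j(Γ) = {(σ,σ') : ξ_{j,σ,σ'} ∈ Γ}. -/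
/-- Formulas of L_EL⁺: atoms, ξ-atoms, negation, conjunction, implication, K_j. -/
inductive ELForm (P A E : Type) : Type
  | atom : P → ELForm P A E
  | xi : A → E → E → ELForm P A E
  | neg : ELForm P A E → ELForm P A E
  | and : ELForm P A E → ELForm P A E → ELForm P A E
  | impl : ELForm P A E → ELForm P A E → ELForm P A E
  | K : A → ELForm P A E → ELForm P A E

namespace ELForm

variable {P A E : Type}

theorem mem_iff_of_impl_mem_of_impl_mem {Γ : Set (ELForm P A E)}
    (hMP : ∀ φ ψ : ELForm P A E, φ ∈ Γ → impl φ ψ ∈ Γ → ψ ∈ Γ) {φ ψ : ELForm P A E}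
    (hφψ : impl φ ψ ∈ Γ) (hψφ : impl ψ φ ∈ Γ) : φ ∈ Γ ↔ ψ ∈ Γ :=
  ⟨fun h => hMP φ ψ h hφψ, fun h => hMP ψ φ h hψφ⟩

end ELForm

/-- In the canonical model, (C1) holds: if Γ ~^c_j Δ (Γ and Δ contain
the same formulas of the form K_j φ) then f^c_j(Γ) = f^c_j(Δ), where
f^c_j(Γ) = {(σ,σ') : ξ_{j,σ,σ'} ∈ Γ}. Γ, Δ are maximal consistent sets of a
system containing the T axiom and the interaction axiom ξ → K_j ξ, MP-closed. -/
theorem canonical_model_C1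
    {P A E : Type}
    (Γ Δ : Set (ELForm P A E))
    (hMPΓ : ∀ φ ψ : ELForm P A E, φ ∈ Γ → ELForm.impl φ ψ ∈ Γ → ψ ∈ Γ)
    (hMPΔ : ∀ φ ψ : ELForm P A E, φ ∈ Δ → ELForm.impl φ ψ ∈ Δ → ψ ∈ Δ)
    -- T axiom instances: K_j φ → φ
    (hTΓ : ∀ (j : A) (φ : ELForm P A E), ELForm.impl (ELForm.K j φ) φ ∈ Γ)
    (hTΔ : ∀ (j : A) (φ : ELForm P A E), ELForm.impl (ELForm.K j φ) φ ∈ Δ)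
    -- interaction axiom instances: ξ_{j,σ,σ'} → K_j ξ_{j,σ,σ'}
    (hIΓ : ∀ (j : A) (σ σ' : E),
      ELForm.impl (ELForm.xi j σ σ') (ELForm.K j (ELForm.xi j σ σ')) ∈ Γ)
    (hIΔ : ∀ (j : A) (σ σ' : E),
      ELForm.impl (ELForm.xi j σ σ') (ELForm.K j (ELForm.xi j σ σ')) ∈ Δ)
    (j : A)
    -- Γ ~^c_j Δ
    (hsim : ∀ φ : ELForm P A E, ELForm.K j φ ∈ Γ ↔ ELForm.K j φ ∈ Δ) :
    ∀ σ σ' : E, ELForm.xi j σ σ' ∈ Γ ↔ ELForm.xi j σ σ' ∈ Δ := by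
  intro σ σ'
  rw [ELForm.mem_iff_of_impl_mem_of_impl_mem hMPΓ (hIΓ j σ σ') (hTΓ j _),
    ELForm.mem_iff_of_impl_mem_of_impl_mem hMPΔ (hIΔ j σ σ') (hTΔ j _)]
  exact hsim _
end

section
/- Every formula φ of L_DL⁺ has a translation t(φ) ∈ L_EL⁺ (containing no update modalities) which is provably equivalent to φ in the given axiom system; the proof proceeds by induction first on the action nesting depth d(φ) and then on the weight w(φ). -/
/-- Formulas of L_DL⁺: atoms p, ξ-atoms, ¬, ∧, K_j, and update modalities [σ]. -/
inductive DLForm (P A E : Type) : Type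
  | atom : P → DLForm P A E
  | xi : A → E → E → DLForm P A E
  | neg : DLForm P A E → DLForm P A E
  | and : DLForm P A E → DLForm P A E → DLForm P A E
  | K : A → DLForm P A E → DLForm P A E
  | box : E → DLForm P A E → DLForm P A E

namespace DLForm

variable {P A E : Type}

/-- Material implication, defined from ¬ and ∧. -/
def impl (φ ψ : DLForm P A E) : DLForm P A E := neg (and φ (neg ψ))

/-- Biconditional. -/
def biimpl (φ ψ : DLForm P A E) : DLForm P A E := and (impl φ ψ) (impl ψ φ)

/-- A fixed tautology (used as the empty conjunction). -/
def top [Inhabited P] : DLForm P A E := impl (atom default) (atom default)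

/-- Finite conjunction of a list of formulas. -/
def bigAnd [Inhabited P] (l : List (DLForm P A E)) : DLForm P A E :=
  l.foldr and top

/-- The conjunction ⋀_{σ'∈Σ} g(σ') over all actions. -/
noncomputable def conjAll [Inhabited P] [Fintype E] (g : E → DLForm P A E) : DLForm P A E :=
  bigAnd ((Finset.univ : Finset E).toList.map g)

/-- Membership in L_EL⁺: no update modalities occur. -/
def NoBox : DLForm P A E → Prop
  | atom _ => True
  | xi _ _ _ => True
  | neg φ => NoBox φ
  | and φ ψ => NoBox φ ∧ NoBox ψ
  | K _ φ => NoBox φ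
  | box _ _ => False

/-- Boolean evaluation treating atoms, ξ-atoms, K-formulas and box-formulas as
propositional atoms; used to express "instantiation of a propositional tautology". -/
def bInterp (v : DLForm P A E → Bool) : DLForm P A E → Bool
  | neg φ => ! bInterp v φ
  | and φ ψ => bInterp v φ && bInterp v ψ
  | φ => v φ

/-- The axiom system: S5 for each K_j, the ξ axioms, the interaction axiom, the
action axioms 10(a)–(e), modus ponens and the necessitation rules. -/
inductive Provable [Inhabited P] [Fintype E] (Pre : E → DLForm P A E) :
    DLForm P A E → Prop
  -- 1. all instantiations of propositional tautologies
  | taut (φ : DLForm P A E) (h : ∀ v, bInterp v φ = true) : Provable Pre φ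
  -- 2. K distribution
  | kdist (a : A) (φ ψ : DLForm P A E) :
      Provable Pre (impl (K a (impl φ ψ)) (impl (K a φ) (K a ψ)))
  -- 3. T
  | tax (a : A) (φ : DLForm P A E) : Provable Pre (impl (K a φ) φ)
  -- 4. positive introspection
  | four (a : A) (φ : DLForm P A E) : Provable Pre (impl (K a φ) (K a (K a φ)))
  -- 5. negative introspection
  | five (a : A) (φ : DLForm P A E) :
      Provable Pre (impl (neg (K a φ)) (K a (neg (K a φ))))
  -- 6. ξ axioms
  | xiRefl (j : A) (σ : E) : Provable Pre (xi j σ σ)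
  | xiSymm (j : A) (σ σ' : E) : Provable Pre (impl (xi j σ σ') (xi j σ' σ))
  | xiTrans (j : A) (σ σ' σ'' : E) :
      Provable Pre (impl (xi j σ σ') (impl (xi j σ' σ'') (xi j σ σ'')))
  -- 7. interaction axiom
  | interact (j : A) (σ σ' : E) :
      Provable Pre (impl (xi j σ σ') (K j (xi j σ σ')))
  -- 10(a). box distribution
  | boxDist (σ : E) (φ ψ : DLForm P A E) :
      Provable Pre (impl (box σ (impl φ ψ)) (impl (box σ φ) (box σ ψ)))
  -- 10(b). atomic reduction (for primitive formulas, including ξ-atoms)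
  | boxAtom (σ : E) (p : P) :
      Provable Pre (biimpl (box σ (atom p)) (impl (Pre σ) (atom p)))
  | boxXi (σ : E) (j : A) (τ τ' : E) :
      Provable Pre (biimpl (box σ (xi j τ τ')) (impl (Pre σ) (xi j τ τ')))
  -- 10(c). negation reduction
  | boxNeg (σ : E) (φ : DLForm P A E) :
      Provable Pre (biimpl (box σ (neg φ)) (impl (Pre σ) (neg (box σ φ))))
  -- 10(d). conjunction reduction
  | boxAnd (σ : E) (φ ψ : DLForm P A E) :
      Provable Pre (biimpl (box σ (and φ ψ)) (and (box σ φ) (box σ ψ)))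
  -- 10(e). knowledge reduction
  | boxK (σ : E) (a : A) (φ : DLForm P A E) :
      Provable Pre (biimpl (box σ (K a φ))
        (impl (Pre σ)
          (conjAll (fun σ' => impl (xi a σ σ') (K a (box σ' φ))))))
  -- 8. modus ponens
  | mp (φ ψ : DLForm P A E) : Provable Pre (impl φ ψ) → Provable Pre φ →
      Provable Pre ψ
  -- 9. K necessitation
  | necK (a : A) (φ : DLForm P A E) : Provable Pre φ → Provable Pre (K a φ)
  -- 11. action necessitation
  | necBox (σ : E) (φ : DLForm P A E) : Provable Pre φ → Provable Pre (box σ φ)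

/-- The recursive translation t, presented as an inductive relation capturing its
defining equations (t([σ][σ']φ) = t([σ] t([σ']φ)) etc.). -/
inductive Tr [Inhabited P] [Fintype E] (Pre : E → DLForm P A E) :
    DLForm P A E → DLForm P A E → Prop
  | atom (p : P) : Tr Pre (atom p) (atom p)
  | xi (j : A) (σ σ' : E) : Tr Pre (xi j σ σ') (xi j σ σ')
  | neg {φ φ'} : Tr Pre φ φ' → Tr Pre (neg φ) (neg φ')
  | and {φ φ' ψ ψ'} : Tr Pre φ φ' → Tr Pre ψ ψ' →
      Tr Pre (and φ ψ) (and φ' ψ')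
  | K (a : A) {φ φ'} : Tr Pre φ φ' → Tr Pre (K a φ) (K a φ')
  | boxAtom (σ : E) (p : P) : Tr Pre (box σ (atom p)) (impl (Pre σ) (atom p))
  | boxXi (σ : E) (j : A) (τ τ' : E) :
      Tr Pre (box σ (xi j τ τ')) (impl (Pre σ) (xi j τ τ'))
  | boxNeg (σ : E) {φ χ} : Tr Pre (box σ φ) χ →
      Tr Pre (box σ (neg φ)) (impl (Pre σ) (neg χ))
  | boxAnd (σ : E) {φ ψ χ₁ χ₂} : Tr Pre (box σ φ) χ₁ → Tr Pre (box σ ψ) χ₂ →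
      Tr Pre (box σ (and φ ψ)) (and χ₁ χ₂)
  | boxK (σ : E) (a : A) {φ} (g : E → DLForm P A E)
      (h : ∀ σ', Tr Pre (box σ' φ) (g σ')) :
      Tr Pre (box σ (K a φ))
        (impl (Pre σ) (conjAll (fun σ' => impl (xi a σ σ') (K a (g σ')))))
  | boxBox (σ σ' : E) {φ ψ χ} : Tr Pre (box σ' φ) ψ → Tr Pre (box σ ψ) χ →
      Tr Pre (box σ (box σ' φ)) χ

end DLForm

/-! For box-free `χ`, a translation of `[σ]χ` is built by structural induction on `χ`, generalising
over `σ` (the `K`-case needs `[σ']χ` for every `σ'`); each step is one reduction axiom 10(b)–(e)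
followed by the congruence rules for `¬`, `∧`, `→`, `K_a` and `⋀`. An arbitrary `φ` is then
translated by structural induction as well: for `[σ]φ`, translate `φ` to a box-free `ψ` and then
`[σ]ψ`. This is a legitimate value of `t([σ]φ)` because `t([σ]φ) = t([σ]t(φ))`, an identity whose
only non-trivial instance is the defining clause `t([σ][σ']φ) = t([σ]t([σ']φ))`. No induction on
depth or weight is needed. -/

namespace DLForm

variable {P A E : Type}

section Provable

variable [Inhabited P] [Fintype E] {Pre : E → DLForm P A E}

lemma Provable.mp_taut {φ ψ : DLForm P A E} (h : Provable Pre φ)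
    (ht : ∀ v, bInterp v (impl φ ψ) = true) : Provable Pre ψ :=
  .mp _ _ (.taut _ ht) h

lemma Provable.mp_taut₂ {φ ψ χ : DLForm P A E} (h₁ : Provable Pre φ) (h₂ : Provable Pre ψ)
    (ht : ∀ v, bInterp v (impl φ (impl ψ χ)) = true) : Provable Pre χ :=
  .mp _ _ (h₁.mp_taut ht) h₂

lemma biimpl_refl (φ : DLForm P A E) : Provable Pre (biimpl φ φ) :=
  .taut _ fun v => by simp only [biimpl, impl, bInterp]; cases bInterp v φ <;> rfl

lemma biimpl_trans {φ ψ χ : DLForm P A E} (h₁ : Provable Pre (biimpl φ ψ))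
    (h₂ : Provable Pre (biimpl ψ χ)) : Provable Pre (biimpl φ χ) :=
  h₁.mp_taut₂ h₂ fun v => by
    simp only [biimpl, impl, bInterp]
    cases bInterp v φ <;> cases bInterp v ψ <;> cases bInterp v χ <;> rfl

lemma biimpl_of_impl_of_impl {φ ψ : DLForm P A E} (h₁ : Provable Pre (impl φ ψ))
    (h₂ : Provable Pre (impl ψ φ)) : Provable Pre (biimpl φ ψ) :=
  h₁.mp_taut₂ h₂ fun v => by
    simp only [biimpl, impl, bInterp]
    cases bInterp v φ <;> cases bInterp v ψ <;> rfl

lemma impl_of_biimpl {φ ψ : DLForm P A E} (h : Provable Pre (biimpl φ ψ)) :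
    Provable Pre (impl φ ψ) :=
  h.mp_taut fun v => by
    simp only [biimpl, impl, bInterp]
    cases bInterp v φ <;> cases bInterp v ψ <;> rfl

lemma biimpl_comm {φ ψ : DLForm P A E} (h : Provable Pre (biimpl φ ψ)) :
    Provable Pre (biimpl ψ φ) :=
  h.mp_taut fun v => by
    simp only [biimpl, impl, bInterp]
    cases bInterp v φ <;> cases bInterp v ψ <;> rfl

lemma neg_congr {φ ψ : DLForm P A E} (h : Provable Pre (biimpl φ ψ)) :
    Provable Pre (biimpl (neg φ) (neg ψ)) :=
  h.mp_taut fun v => by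
    simp only [biimpl, impl, bInterp]
    cases bInterp v φ <;> cases bInterp v ψ <;> rfl

lemma and_congr {φ₁ ψ₁ φ₂ ψ₂ : DLForm P A E} (h₁ : Provable Pre (biimpl φ₁ ψ₁))
    (h₂ : Provable Pre (biimpl φ₂ ψ₂)) : Provable Pre (biimpl (and φ₁ φ₂) (and ψ₁ ψ₂)) :=
  h₁.mp_taut₂ h₂ fun v => by
    simp only [biimpl, impl, bInterp]
    cases bInterp v φ₁ <;> cases bInterp v ψ₁ <;> cases bInterp v φ₂ <;> cases bInterp v ψ₂ <;> rfl

lemma impl_congr_right (α : DLForm P A E) {φ ψ : DLForm P A E}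
    (h : Provable Pre (biimpl φ ψ)) : Provable Pre (biimpl (impl α φ) (impl α ψ)) :=
  h.mp_taut fun v => by
    simp only [biimpl, impl, bInterp]
    cases bInterp v α <;> cases bInterp v φ <;> cases bInterp v ψ <;> rfl

lemma K_congr (a : A) {φ ψ : DLForm P A E} (h : Provable Pre (biimpl φ ψ)) :
    Provable Pre (biimpl (K a φ) (K a ψ)) :=
  biimpl_of_impl_of_impl
    (.mp _ _ (.kdist a φ ψ) (.necK a _ (impl_of_biimpl h)))
    (.mp _ _ (.kdist a ψ φ) (.necK a _ (impl_of_biimpl (biimpl_comm h))))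

lemma box_congr (σ : E) {φ ψ : DLForm P A E} (h : Provable Pre (biimpl φ ψ)) :
    Provable Pre (biimpl (box σ φ) (box σ ψ)) :=
  biimpl_of_impl_of_impl
    (.mp _ _ (.boxDist σ φ ψ) (.necBox σ _ (impl_of_biimpl h)))
    (.mp _ _ (.boxDist σ ψ φ) (.necBox σ _ (impl_of_biimpl (biimpl_comm h))))

lemma bigAnd_map_congr {ι : Type} {f g : ι → DLForm P A E} (l : List ι)
    (h : ∀ x ∈ l, Provable Pre (biimpl (f x) (g x))) :
    Provable Pre (biimpl (bigAnd (l.map f)) (bigAnd (l.map g))) := by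
  induction l with
  | nil => exact biimpl_refl _
  | cons x l ih =>
    exact and_congr (h x List.mem_cons_self) (ih fun y hy => h y (List.mem_cons_of_mem x hy))

lemma conjAll_congr {f g : E → DLForm P A E} (h : ∀ σ, Provable Pre (biimpl (f σ) (g σ))) :
    Provable Pre (biimpl (conjAll f) (conjAll g)) :=
  bigAnd_map_congr _ fun σ _ => h σ

end Provable

lemma noBox_impl {φ ψ : DLForm P A E} : NoBox (impl φ ψ) ↔ NoBox φ ∧ NoBox ψ :=
  Iff.rfl

lemma noBox_bigAnd [Inhabited P] {l : List (DLForm P A E)} (h : ∀ φ ∈ l, NoBox φ) :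
    NoBox (bigAnd l) := by
  induction l with
  | nil => exact ⟨trivial, trivial⟩
  | cons φ l ih => exact ⟨h φ List.mem_cons_self, ih fun ψ hψ => h ψ (List.mem_cons_of_mem φ hψ)⟩

lemma noBox_conjAll [Inhabited P] [Fintype E] {g : E → DLForm P A E} (h : ∀ σ, NoBox (g σ)) :
    NoBox (conjAll g) :=
  noBox_bigAnd fun φ hφ => by
    obtain ⟨σ, -, rfl⟩ := List.mem_map.1 hφ
    exact h σ

section Translation

variable [Inhabited P] [Fintype E] {Pre : E → DLForm P A E}

lemma Tr.box_of_tr_box {φ ψ χ : DLForm P A E} {σ : E} (hψ : Tr Pre φ ψ)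
    (hχ : Tr Pre (box σ ψ) χ) : Tr Pre (box σ φ) χ := by
  induction hψ generalizing σ χ with
  | atom | xi => exact hχ
  | neg _ ih =>
    cases hχ with
    | boxNeg _ h => exact .boxNeg σ (ih h)
  | and _ _ ih₁ ih₂ =>
    cases hχ with
    | boxAnd _ h₁ h₂ => exact .boxAnd σ (ih₁ h₁) (ih₂ h₂)
  | K a _ ih =>
    cases hχ with
    | boxK _ _ g h => exact .boxK σ a g fun σ' => ih (h σ')
  | boxAtom τ p => exact .boxBox σ τ (.boxAtom τ p) hχ
  | boxXi τ j ρ ρ' => exact .boxBox σ τ (.boxXi τ j ρ ρ') hχ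
  | boxNeg τ h => exact .boxBox σ τ (.boxNeg τ h) hχ
  | boxAnd τ h₁ h₂ => exact .boxBox σ τ (.boxAnd τ h₁ h₂) hχ
  | boxK τ a g h => exact .boxBox σ τ (.boxK τ a g h) hχ
  | boxBox τ τ' h₁ h₂ => exact .boxBox σ τ (.boxBox τ τ' h₁ h₂) hχ

lemma exists_tr_box_of_noBox (hPre : ∀ σ, NoBox (Pre σ)) {χ : DLForm P A E} (hχ : NoBox χ)
    (σ : E) :
    ∃ θ, Tr Pre (box σ χ) θ ∧ NoBox θ ∧ Provable Pre (biimpl (box σ χ) θ) := by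
  induction χ generalizing σ with
  | atom p => exact ⟨_, .boxAtom σ p, noBox_impl.2 ⟨hPre σ, trivial⟩, .boxAtom σ p⟩
  | xi j τ τ' => exact ⟨_, .boxXi σ j τ τ', noBox_impl.2 ⟨hPre σ, trivial⟩, .boxXi σ j τ τ'⟩
  | neg χ ih =>
    obtain ⟨θ, htr, hθ, hprov⟩ := ih hχ σ
    exact ⟨_, .boxNeg σ htr, noBox_impl.2 ⟨hPre σ, hθ⟩,
      biimpl_trans (.boxNeg σ χ) (impl_congr_right _ (neg_congr hprov))⟩
  | and χ₁ χ₂ ih₁ ih₂ =>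
    obtain ⟨θ₁, htr₁, hθ₁, hprov₁⟩ := ih₁ hχ.1 σ
    obtain ⟨θ₂, htr₂, hθ₂, hprov₂⟩ := ih₂ hχ.2 σ
    exact ⟨_, .boxAnd σ htr₁ htr₂, ⟨hθ₁, hθ₂⟩,
      biimpl_trans (.boxAnd σ χ₁ χ₂) (and_congr hprov₁ hprov₂)⟩
  | K a χ ih =>
    choose g htr hg hprov using ih hχ
    refine ⟨_, .boxK σ a g htr,
      noBox_impl.2 ⟨hPre σ, noBox_conjAll fun σ' => noBox_impl.2 ⟨trivial, hg σ'⟩⟩, ?_⟩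
    exact biimpl_trans (.boxK σ a χ) <| impl_congr_right _ <|
      conjAll_congr fun σ' => impl_congr_right _ (K_congr a (hprov σ'))
  | box => exact hχ.elim

end Translation

end DLForm

open DLForm in
/-- Every formula φ of L_DL⁺ has a translation t(φ) ∈ L_EL⁺
(containing no update modalities) which is provably equivalent to φ in the given
axiom system (with each precondition Pre(σ) an epistemic formula). -/
theorem translation_exists_provably_equivalent
    {P A E : Type} [Inhabited P] [Fintype E]
    (Pre : E → DLForm P A E)
    (hPre : ∀ σ : E, NoBox (Pre σ)) :
    ∀ φ : DLForm P A E, ∃ ψ : DLForm P A E,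
      Tr Pre φ ψ ∧ NoBox ψ ∧ Provable Pre (biimpl φ ψ) := by
  intro φ
  induction φ with
  | atom p => exact ⟨_, .atom p, trivial, biimpl_refl _⟩
  | xi j σ σ' => exact ⟨_, .xi j σ σ', trivial, biimpl_refl _⟩
  | neg φ ih =>
    obtain ⟨ψ, htr, hψ, hprov⟩ := ih
    exact ⟨_, .neg htr, hψ, neg_congr hprov⟩
  | and φ₁ φ₂ ih₁ ih₂ =>
    obtain ⟨ψ₁, htr₁, hψ₁, hprov₁⟩ := ih₁
    obtain ⟨ψ₂, htr₂, hψ₂, hprov₂⟩ := ih₂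
    exact ⟨_, .and htr₁ htr₂, ⟨hψ₁, hψ₂⟩, and_congr hprov₁ hprov₂⟩
  | K a φ ih =>
    obtain ⟨ψ, htr, hψ, hprov⟩ := ih
    exact ⟨_, .K a htr, hψ, K_congr a hprov⟩
  | box σ φ ih =>
    obtain ⟨ψ, htr, hψ, hprov⟩ := ih
    obtain ⟨χ, htrχ, hχ, hprovχ⟩ := exists_tr_box_of_noBox hPre hψ σ
    exact ⟨χ, htr.box_of_tr_box htrχ, hχ, biimpl_trans (box_congr σ hprov) hprovχ⟩
end
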